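/- There exist c > 0 and K ∈ ℕ (depending on β, m, δ) such that for all τ₁, τ₂, τ₃ ∈ ℝ and k₁, k₂, k₃ ∈ ℤ \ {0} with τ₁ + τ₂ + τ₃ = 0, k₁ + k₂ + k₃ = 0 and max{|k₁|, |k₂|, |k₃|} ≥ K, one has max_{j∈{1,2,3}} ⟨(τ_j - λ_{k_j})/⟨k_j⟩^δ⟩ ≥ c · (max_j ⟨k_j⟩)^{2m - δ} · min_j ⟨k_j⟩. -/

import Mathlib

/-!
Write `λ_k = -D k - 2μk` with `D x = β x |x|^{2m} - α x |x|^{2r}`. On `k₁ + k₂ + k₃ = 0` the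
linear part cancels, and since the two smallest frequencies have the same sign, `Σ λ_{k_j}` is,
up to sign, `D (a + b) - D a - D b` with `a, b > 0` the two smallest `|k_j|`. Bernoulli's
inequality (convexity of `x ↦ x^{p+1}`) bounds `(a+b)^{p+1} - a^{p+1} - b^{p+1}` below by
`p · min a b · ((a+b)/2)^p` and above by `(p+1) · min a b · (a+b)^p`; as `r < m`, for large
`max |k_j|` the `β`-term dominates and `|Σ λ_{k_j}| ≳ min |k_j| · max |k_j|^{2m}`. On the other
hand `τ₁ + τ₂ + τ₃ = 0` gives `|Σ λ_{k_j}| ≤ 3 max ⟨k_j⟩^δ · max ⟨(τ_j - λ_{k_j}) / ⟨k_j⟩^δ⟩`.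
-/

/-- The Japanese bracket `⟨x⟩ = (1 + |x|²)^{1/2}`. -/
noncomputable def jbr (x : ℝ) : ℝ := Real.sqrt (1 + x ^ 2)

open Real

lemma one_le_jbr (x : ℝ) : 1 ≤ jbr x :=
  one_le_sqrt.2 (le_add_of_nonneg_right (sq_nonneg x))

lemma jbr_pos (x : ℝ) : 0 < jbr x :=
  zero_lt_one.trans_le (one_le_jbr x)

lemma abs_le_jbr (x : ℝ) : |x| ≤ jbr x :=
  abs_le_sqrt (le_add_of_nonneg_left zero_le_one)

lemma abs_le_mul_jbr_div {w : ℝ} (hw : 0 < w) (y : ℝ) : |y| ≤ w * jbr (y / w) := by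
  calc |y| = w * |y / w| := by rw [abs_div, abs_of_pos hw, mul_div_cancel₀ _ hw.ne']
    _ ≤ w * jbr (y / w) := mul_le_mul_of_nonneg_left (abs_le_jbr _) hw.le

lemma jbr_intCast_le_two_mul_abs {k : ℤ} (hk : k ≠ 0) : jbr k ≤ 2 * |(k : ℝ)| := by
  have hk1 : (1 : ℝ) ≤ |(k : ℝ)| := by exact_mod_cast Int.one_le_abs hk
  refine (sqrt_le_left (by positivity)).2 ?_
  nlinarith [sq_abs (k : ℝ)]

lemma abs_add_add_le_three_mul_max_jbr {τ₁ τ₂ τ₃ l₁ l₂ l₃ w₁ w₂ w₃ W : ℝ}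
    (hτ : τ₁ + τ₂ + τ₃ = 0) (hw₁ : 0 < w₁) (hw₂ : 0 < w₂) (hw₃ : 0 < w₃)
    (hw₁W : w₁ ≤ W) (hw₂W : w₂ ≤ W) (hw₃W : w₃ ≤ W) :
    |l₁ + l₂ + l₃| ≤ 3 * W * max (jbr ((τ₁ - l₁) / w₁))
      (max (jbr ((τ₂ - l₂) / w₂)) (jbr ((τ₃ - l₃) / w₃))) := by
  set G := max (jbr ((τ₁ - l₁) / w₁)) (max (jbr ((τ₂ - l₂) / w₂)) (jbr ((τ₃ - l₃) / w₃)))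
  have bound {τ l w : ℝ} (hw : 0 < w) (hwW : w ≤ W) (hG : jbr ((τ - l) / w) ≤ G) :
      |τ - l| ≤ W * G :=
    (abs_le_mul_jbr_div hw _).trans (mul_le_mul hwW hG (jbr_pos _).le (hw.le.trans hwW))
  have h₁ := bound hw₁ hw₁W (le_max_left _ _)
  have h₂ := bound hw₂ hw₂W ((le_max_left _ _).trans (le_max_right _ _))
  have h₃ := bound hw₃ hw₃W ((le_max_right _ _).trans (le_max_right _ _))
  have hl : l₁ + l₂ + l₃ = -((τ₁ - l₁) + (τ₂ - l₂) + (τ₃ - l₃)) := by linear_combination hτ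
  rw [hl, abs_neg]
  linarith [abs_add_three (τ₁ - l₁) (τ₂ - l₂) (τ₃ - l₃)]

lemma exists_nat_forall_le_rpow {e : ℝ} (he : 0 < e) (C : ℝ) :
    ∃ K : ℕ, ∀ x : ℝ, (K : ℝ) ≤ x → C ≤ x ^ e := by
  obtain ⟨a, ha⟩ := Filter.eventually_atTop.1 ((tendsto_rpow_atTop he).eventually_ge_atTop C)
  exact ⟨⌈a⌉₊, fun x hx => ha x ((Nat.le_ceil a).trans hx)⟩

section SignedPower

variable {p : ℝ}

/-- The tangent line of the convex function `x ↦ x ^ (p + 1)` at `y` lies below its graph. -/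
lemma mul_rpow_add_mul_sub_le (hp : 0 ≤ p) {x y : ℝ} (hx : 0 ≤ x) (hy : 0 < y) :
    y * y ^ p + (p + 1) * y ^ p * (x - y) ≤ x * x ^ p := by
  have h := one_add_mul_self_le_rpow_one_add (s := x / y - 1)
    (by linarith [div_nonneg hx hy.le]) (p := p + 1) (by linarith)
  rw [add_sub_cancel, div_rpow hx hy.le, le_div_iff₀ (by positivity),
    rpow_add_one' hx (by linarith), rpow_add_one hy.ne'] at h
  calc y * y ^ p + (p + 1) * y ^ p * (x - y) = (1 + (p + 1) * (x / y - 1)) * (y ^ p * y) := by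
        field_simp
    _ ≤ x ^ p * x := h
    _ = x * x ^ p := mul_comm _ _

lemma add_mul_rpow_sub_le (hp : 0 ≤ p) {a b : ℝ} (ha : 0 < a) (hb : 0 < b) :
    (a + b) * (a + b) ^ p - a * a ^ p - b * b ^ p ≤ (p + 1) * min a b * (a + b) ^ p := by
  wlog hab : a ≤ b generalizing a b
  · have := this hb ha (le_of_not_ge hab)
    rw [add_comm b a, min_comm] at this
    linarith
  have h := mul_rpow_add_mul_sub_le hp hb.le (add_pos ha hb)
  rw [min_eq_left hab]
  nlinarith [mul_nonneg ha.le (rpow_nonneg ha.le p)]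

lemma le_add_mul_rpow_sub (hp : 0 ≤ p) {a b : ℝ} (ha : 0 < a) (hb : 0 < b) :
    p * min a b * ((a + b) / 2) ^ p ≤ (a + b) * (a + b) ^ p - a * a ^ p - b * b ^ p := by
  wlog hab : a ≤ b generalizing a b
  · have := this hb ha (le_of_not_ge hab)
    rw [add_comm b a, min_comm] at this
    linarith
  have h := mul_rpow_add_mul_sub_le hp (add_pos ha hb).le hb
  have ha_pow : a * a ^ p ≤ a * b ^ p :=
    mul_le_mul_of_nonneg_left (rpow_le_rpow ha.le hab hp) ha.le
  have hmid : ((a + b) / 2) ^ p ≤ b ^ p := rpow_le_rpow (by positivity) (by linarith) hp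
  rw [min_eq_left hab]
  nlinarith [mul_le_mul_of_nonneg_left hmid (mul_nonneg hp ha.le)]

end SignedPower

section Dispersion

variable {α β p q : ℝ}

noncomputable def dispersion (α β p q x : ℝ) : ℝ := β * x * |x| ^ p - α * x * |x| ^ q

lemma dispersion_neg (x : ℝ) : dispersion α β p q (-x) = -dispersion α β p q x := by
  simp only [dispersion, abs_neg]
  ring

lemma le_dispersion_add_sub (hα : 0 ≤ α) (hβ : 0 ≤ β) (hp : 0 ≤ p) (hq : 0 ≤ q)
    {a b : ℝ} (ha : 0 < a) (hb : 0 < b)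
    (hC : α * (q + 1) ≤ β * p / 2 ^ (p + 1) * (a + b) ^ (p - q)) :
    β * p / 2 ^ (p + 1) * min a b * (a + b) ^ p ≤
      dispersion α β p q (a + b) - dispersion α β p q a - dispersion α β p q b := by
  have hs := add_pos ha hb
  simp only [dispersion, abs_of_pos ha, abs_of_pos hb, abs_of_pos hs]
  have hβpart : 2 * (β * p / 2 ^ (p + 1) * min a b * (a + b) ^ p) ≤
      β * ((a + b) * (a + b) ^ p - a * a ^ p - b * b ^ p) := by
    calc 2 * (β * p / 2 ^ (p + 1) * min a b * (a + b) ^ p)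
        = β * (p * min a b * ((a + b) / 2) ^ p) := by
          rw [div_rpow hs.le zero_le_two, rpow_add_one two_ne_zero]
          field_simp
      _ ≤ _ := mul_le_mul_of_nonneg_left (le_add_mul_rpow_sub hp ha hb) hβ
  have hαpart : α * ((a + b) * (a + b) ^ q - a * a ^ q - b * b ^ q) ≤
      β * p / 2 ^ (p + 1) * min a b * (a + b) ^ p := by
    calc α * ((a + b) * (a + b) ^ q - a * a ^ q - b * b ^ q)
        ≤ α * (q + 1) * (min a b * (a + b) ^ q) := by
          rw [mul_assoc, ← mul_assoc (q + 1)]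
          exact mul_le_mul_of_nonneg_left (add_mul_rpow_sub_le hq ha hb) hα
      _ ≤ β * p / 2 ^ (p + 1) * (a + b) ^ (p - q) * (min a b * (a + b) ^ q) :=
          mul_le_mul_of_nonneg_right hC (by positivity)
      _ = β * p / 2 ^ (p + 1) * min a b * (a + b) ^ p := by
          rw [rpow_sub hs]
          field_simp
  linarith

lemma mul_min_mul_max_rpow_le_abs_dispersion_sum (hα : 0 ≤ α) (hβ : 0 ≤ β) (hp : 0 ≤ p)
    (hq : 0 ≤ q) {x₁ x₂ x₃ : ℝ} (h₁ : x₁ ≠ 0) (h₂ : x₂ ≠ 0) (h₃ : x₃ ≠ 0)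
    (hsum : x₁ + x₂ + x₃ = 0)
    (hC : α * (q + 1) ≤ β * p / 2 ^ (p + 1) * max |x₁| (max |x₂| |x₃|) ^ (p - q)) :
    β * p / 2 ^ (p + 1) * min |x₁| (min |x₂| |x₃|) * max |x₁| (max |x₂| |x₃|) ^ p ≤
      |dispersion α β p q x₁ + dispersion α β p q x₂ + dispersion α β p q x₃| := by
  wlog hmax : |x₁| ≤ |x₃| ∧ |x₂| ≤ |x₃| generalizing x₁ x₂ x₃
  · rcases le_total |x₂| |x₁| with h21 | h12
    · have key := this h₂ h₃ h₁ (by linarith) (by convert hC using 3; ac_rfl)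
        ⟨h21, by contrapose! hmax; exact ⟨hmax.le, h21.trans hmax.le⟩⟩
      convert key using 2 <;> ac_rfl
    · have key := this h₃ h₁ h₂ (by linarith) (by convert hC using 3; ac_rfl)
        ⟨by contrapose! hmax; exact ⟨h12.trans hmax.le, hmax.le⟩, h12⟩
      convert key using 2 <;> ac_rfl
  wlog hx₁ : 0 < x₁ generalizing x₁ x₂ x₃
  · have key := this (neg_ne_zero.2 h₁) (neg_ne_zero.2 h₂) (neg_ne_zero.2 h₃) (by linarith)
      (by simpa only [abs_neg] using hC) (by simpa only [abs_neg] using hmax)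
      (by linarith [lt_of_le_of_ne (not_lt.1 hx₁) h₁])
    rwa [abs_neg, abs_neg, abs_neg, dispersion_neg, dispersion_neg, dispersion_neg,
      ← neg_add, ← neg_add, abs_neg] at key
  obtain rfl : x₃ = -(x₁ + x₂) := by linarith
  have hx₂ : 0 < x₂ := by
    by_contra! hx₂
    replace hx₂ := lt_of_le_of_ne hx₂ h₂
    obtain ⟨h13, h23⟩ := hmax
    rw [abs_neg, abs_of_pos hx₁] at h13
    rw [abs_neg, abs_of_neg hx₂] at h23
    rcases abs_cases (x₁ + x₂) with ⟨h, -⟩ | ⟨h, -⟩ <;> linarith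
  have hs := add_pos hx₁ hx₂
  have hmin : min x₁ (min x₂ (x₁ + x₂)) = min x₁ x₂ := by
    rw [min_eq_left (by linarith : x₂ ≤ x₁ + x₂)]
  have hmax' : max x₁ (max x₂ (x₁ + x₂)) = x₁ + x₂ := by
    rw [max_eq_right (by linarith : x₂ ≤ x₁ + x₂), max_eq_right (by linarith)]
  rw [abs_neg, abs_of_pos hx₁, abs_of_pos hx₂, abs_of_pos hs, hmax'] at hC ⊢
  rw [hmin, dispersion_neg]
  calc _ ≤ dispersion α β p q (x₁ + x₂) - dispersion α β p q x₁ - dispersion α β p q x₂ :=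
        le_dispersion_add_sub hα hβ hp hq hx₁ hx₂ hC
    _ ≤ _ := by
        rw [← abs_neg]
        exact (le_of_eq (by ring)).trans (le_abs_self _)

end Dispersion

lemma lam_add_add_eq_neg_dispersion {α β p q μ : ℝ} {lam : ℤ → ℝ}
    (hlam : ∀ k : ℤ, lam k =
      -β * (k : ℝ) * |(k : ℝ)| ^ p + α * (k : ℝ) * |(k : ℝ)| ^ q - 2 * μ * (k : ℝ))
    {k₁ k₂ k₃ : ℤ} (hk : k₁ + k₂ + k₃ = 0) :
    lam k₁ + lam k₂ + lam k₃ =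
      -(dispersion α β p q k₁ + dispersion α β p q k₂ + dispersion α β p q k₃) := by
  have hkR : (k₁ : ℝ) + k₂ + k₃ = 0 := by exact_mod_cast hk
  simp only [hlam, dispersion]
  linear_combination (-2 * μ) * hkR

lemma abs_add_add_le_three_mul_max_rpow_mul_max_jbr {τ₁ τ₂ τ₃ l₁ l₂ l₃ v₁ v₂ v₃ δ : ℝ}
    (hτ : τ₁ + τ₂ + τ₃ = 0) (hv₁ : 0 < v₁) (hv₂ : 0 < v₂) (hv₃ : 0 < v₃) (hδ : 0 ≤ δ) :
    |l₁ + l₂ + l₃| ≤ 3 * max v₁ (max v₂ v₃) ^ δ * max (jbr ((τ₁ - l₁) / v₁ ^ δ))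
      (max (jbr ((τ₂ - l₂) / v₂ ^ δ)) (jbr ((τ₃ - l₃) / v₃ ^ δ))) :=
  abs_add_add_le_three_mul_max_jbr hτ (rpow_pos_of_pos hv₁ δ) (rpow_pos_of_pos hv₂ δ)
    (rpow_pos_of_pos hv₃ δ) (rpow_le_rpow hv₁.le (le_max_left _ _) hδ)
    (rpow_le_rpow hv₂.le ((le_max_left _ _).trans (le_max_right _ _)) hδ)
    (rpow_le_rpow hv₃.le ((le_max_right _ _).trans (le_max_right _ _)) hδ)

lemma max_jbr_le_two_mul_max_abs {k₁ k₂ k₃ : ℤ} (h₁ : k₁ ≠ 0) (h₂ : k₂ ≠ 0) (h₃ : k₃ ≠ 0) :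
    max (jbr k₁) (max (jbr k₂) (jbr k₃)) ≤ 2 * max |(k₁ : ℝ)| (max |(k₂ : ℝ)| |(k₃ : ℝ)|) := by
  rw [mul_max_of_nonneg _ _ zero_le_two, mul_max_of_nonneg _ _ zero_le_two]
  exact max_le_max (jbr_intCast_le_two_mul_abs h₁)
    (max_le_max (jbr_intCast_le_two_mul_abs h₂) (jbr_intCast_le_two_mul_abs h₃))

lemma min_jbr_le_two_mul_min_abs {k₁ k₂ k₃ : ℤ} (h₁ : k₁ ≠ 0) (h₂ : k₂ ≠ 0) (h₃ : k₃ ≠ 0) :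
    min (jbr k₁) (min (jbr k₂) (jbr k₃)) ≤ 2 * min |(k₁ : ℝ)| (min |(k₂ : ℝ)| |(k₃ : ℝ)|) := by
  rw [mul_min_of_nonneg _ _ zero_le_two, mul_min_of_nonneg _ _ zero_le_two]
  exact min_le_min (jbr_intCast_le_two_mul_abs h₁)
    (min_le_min (jbr_intCast_le_two_mul_abs h₂) (jbr_intCast_le_two_mul_abs h₃))

lemma div_mul_rpow_sub_mul_le {c p δ J N M n G : ℝ} (hc : 0 ≤ c) (hp : 0 ≤ p) (hJ : 0 < J)
    (hN : 0 ≤ N) (hJM : J ≤ 2 * M) (hNn : N ≤ 2 * n) (h : c * n * M ^ p ≤ 3 * J ^ δ * G) :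
    c / (3 * 2 ^ (p + 1)) * J ^ (p - δ) * N ≤ G := by
  have hM : 0 ≤ M := by linarith
  rw [rpow_sub hJ, mul_div_assoc', div_mul_eq_mul_div, div_le_iff₀ (rpow_pos_of_pos hJ δ)]
  calc c / (3 * 2 ^ (p + 1)) * J ^ p * N ≤ c / (3 * 2 ^ (p + 1)) * (2 * M) ^ p * (2 * n) := by
        gcongr
    _ = c * n * M ^ p / 3 := by
        rw [mul_rpow zero_le_two hM, rpow_add_one two_ne_zero]
        field_simp
    _ ≤ G * J ^ δ := by linarith

/-- there are `c > 0` and `K ∈ ℕ` such that for all `τ₁+τ₂+τ₃ = 0` and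
nonzero `k₁+k₂+k₃ = 0` with `max |k_j| ≥ K`,
`max_j ⟨(τ_j - λ_{k_j})/⟨k_j⟩^δ⟩ ≥ c (max_j ⟨k_j⟩)^{2m-δ} (min_j ⟨k_j⟩)`. -/
theorem modulation_max_resonance_lower_bound
    (α β μ m r δ : ℝ) (hα : 0 < α) (hβ : 0 < β) (hr : 0 < r) (hrm : r < m) (hδ : 0 < δ)
    (lam : ℤ → ℝ)
    (hlam : ∀ k : ℤ, lam k =
      -β * (k : ℝ) * |(k : ℝ)| ^ (2 * m) + α * (k : ℝ) * |(k : ℝ)| ^ (2 * r) - 2 * μ * (k : ℝ)) :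
    ∃ c > 0, ∃ K : ℕ, ∀ τ₁ τ₂ τ₃ : ℝ, ∀ k₁ k₂ k₃ : ℤ,
      k₁ ≠ 0 → k₂ ≠ 0 → k₃ ≠ 0 → τ₁ + τ₂ + τ₃ = 0 → k₁ + k₂ + k₃ = 0 →
      (K : ℤ) ≤ max |k₁| (max |k₂| |k₃|) →
      c * max (jbr (k₁ : ℝ)) (max (jbr (k₂ : ℝ)) (jbr (k₃ : ℝ))) ^ (2 * m - δ)
          * min (jbr (k₁ : ℝ)) (min (jbr (k₂ : ℝ)) (jbr (k₃ : ℝ)))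
        ≤ max (jbr ((τ₁ - lam k₁) / jbr (k₁ : ℝ) ^ δ))
            (max (jbr ((τ₂ - lam k₂) / jbr (k₂ : ℝ) ^ δ))
              (jbr ((τ₃ - lam k₃) / jbr (k₃ : ℝ) ^ δ))) := by
  have hm : 0 < m := hr.trans hrm
  have hc₀ : 0 < β * (2 * m) / 2 ^ (2 * m + 1) := by positivity
  obtain ⟨K, hK⟩ := exists_nat_forall_le_rpow (by linarith : 0 < 2 * m - 2 * r)
    (α * (2 * r + 1) / (β * (2 * m) / 2 ^ (2 * m + 1)))
  refine ⟨β * (2 * m) / 2 ^ (2 * m + 1) / (3 * 2 ^ (2 * m + 1)), by positivity, K,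
    fun τ₁ τ₂ τ₃ k₁ k₂ k₃ h₁ h₂ h₃ hτ hk hKk => ?_⟩
  have hMK : (K : ℝ) ≤ max |(k₁ : ℝ)| (max |(k₂ : ℝ)| |(k₃ : ℝ)|) := by exact_mod_cast hKk
  have hres := mul_min_mul_max_rpow_le_abs_dispersion_sum hα.le hβ.le (by positivity)
    (by positivity) (Int.cast_ne_zero.2 h₁) (Int.cast_ne_zero.2 h₂) (Int.cast_ne_zero.2 h₃)
    (by exact_mod_cast hk) ((div_le_iff₀' hc₀).1 (hK _ hMK))
  rw [← abs_neg (_ + _), ← lam_add_add_eq_neg_dispersion hlam hk] at hres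
  have hmod := abs_add_add_le_three_mul_max_rpow_mul_max_jbr (l₁ := lam k₁) (l₂ := lam k₂)
    (l₃ := lam k₃) hτ (jbr_pos k₁) (jbr_pos k₂) (jbr_pos k₃) hδ.le
  exact div_mul_rpow_sub_mul_le hc₀.le (by positivity) ((jbr_pos _).trans_le (le_max_left _ _))
    (le_min (jbr_pos _).le (le_min (jbr_pos _).le (jbr_pos _).le))
    (max_jbr_le_two_mul_max_abs h₁ h₂ h₃) (min_jbr_le_two_mul_min_abs h₁ h₂ h₃) (hres.trans hmod)
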